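/- The rational function F(w¹,w²,w³,w⁴) = w¹(w¹w²/8 + w³w⁴/4) + (w²)⁵/3840 + (w²)²w³w⁴/32 + w²(w⁴)⁴/768 + (w³)³/(6w⁴) satisfies the WDVV associativity equations on the domain {w⁴ ≠ 0} ⊂ ℝ⁴ with constant metric η given by η₁₂ = η₂₁ = 1/4, η₃₄ = η₄₃ = 1/4 and all other entries zero: for all α,β one has ∂₁∂_α∂_β F = η_{αβ}, the matrix η is invertible, and the structure constants c^γ_{αβ} = Σ_ε (η⁻¹)^{γε} ∂_ε∂_α∂_β F satisfy Σ_ε c^ε_{αβ} c^σ_{εγ} = Σ_ε c^ε_{αγ} c^σ_{εβ} for all α,β,γ,σ at every point with w⁴ ≠ 0. -/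

import Mathlib

/-!
The only non-polynomial term of `F` is `(w³)³ / (6 w⁴)`, so on the open set `{w⁴ ≠ 0}` every
partial derivative of `F` is a rational function whose denominator is a power of `w⁴`, and the
gradient, Hessian and third derivatives can be computed explicitly by the sum, product, power and
quotient rules. Reading off `∂₁∂_α∂_β F = η_{αβ}` is then immediate. Since `η² = 1/16`, raising
an index with `η⁻¹ = 16 η` only permutes the indices `1 ↔ 2`, `3 ↔ 4` (up to the factor `4`), and
the associativity equations become identities between rational functions, checked case by case.
-/

/-- Partial derivative of `f : (Fin N → ℝ) → ℝ` in the `i`-th coordinate direction. -/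
noncomputable def pd {N : ℕ} (i : Fin N) (f : (Fin N → ℝ) → ℝ) : (Fin N → ℝ) → ℝ :=
  fun x => fderiv ℝ f x (Pi.single i 1)

/-- The potential. -/
noncomputable def FF : (Fin 4 → ℝ) → ℝ :=
  fun w => w 0 * (w 0 * w 1 / 8 + w 2 * w 3 / 4) + (w 1) ^ 5 / 3840 + (w 1) ^ 2 * w 2 * w 3 / 32 + w 1 * (w 3) ^ 4 / 768 + (w 2) ^ 3 / (6 * w 3)

/-- The constant metric. -/
noncomputable def eta : Matrix (Fin 4) (Fin 4) ℝ :=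
  !![0, 1/4, 0, 0; 1/4, 0, 0, 0; 0, 0, 0, 1/4; 0, 0, 1/4, 0]

/-- Third partial derivatives `c_(αβγ) = ∂_α ∂_β ∂_γ F`. -/
noncomputable def c3 (α β γ : Fin 4) (x : Fin 4 → ℝ) : ℝ :=
  pd α (pd β (pd γ FF)) x

/-- Structure constants `c^γ_(αβ) = Σ_ε (η⁻¹)^(γε) c_(εαβ)`. -/
noncomputable def cUp (γ α β : Fin 4) (x : Fin 4 → ℝ) : ℝ :=
  ∑ ε, eta⁻¹ γ ε * c3 ε α β x

open Filter Topology Set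

section PartialDerivative

variable {N : ℕ} {f g : (Fin N → ℝ) → ℝ} {x : Fin N → ℝ} (i : Fin N)

theorem pd_congr (h : f =ᶠ[𝓝 x] g) : pd i f x = pd i g x := by
  rw [pd, pd, h.fderiv_eq]

theorem pd_congr_of_eqOn {U : Set (Fin N → ℝ)} (hU : IsOpen U) (h : EqOn f g U) (hx : x ∈ U) :
    pd i f x = pd i g x :=
  pd_congr i (eventuallyEq_of_mem (hU.mem_nhds hx) h)

theorem pd_coord (j : Fin N) : pd i (fun w => w j) x = if j = i then 1 else 0 := by
  rw [pd, (hasFDerivAt_apply (𝕜 := ℝ) j x).fderiv]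
  simp [Pi.single_apply]

theorem pd_const (c : ℝ) : pd i (fun _ => c) x = 0 := by
  simp [pd]

theorem pd_fun_add (hf : DifferentiableAt ℝ f x) (hg : DifferentiableAt ℝ g x) :
    pd i (fun w => f w + g w) x = pd i f x + pd i g x := by
  simp [pd, fderiv_fun_add hf hg]

theorem pd_fun_sub (hf : DifferentiableAt ℝ f x) (hg : DifferentiableAt ℝ g x) :
    pd i (fun w => f w - g w) x = pd i f x - pd i g x := by
  simp [pd, fderiv_fun_sub hf hg]

theorem pd_fun_mul (hf : DifferentiableAt ℝ f x) (hg : DifferentiableAt ℝ g x) :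
    pd i (fun w => f w * g w) x = pd i f x * g x + f x * pd i g x := by
  simp [pd, fderiv_fun_mul hf hg]
  ring

theorem pd_fun_pow (hf : DifferentiableAt ℝ f x) (n : ℕ) :
    pd i (fun w => f w ^ n) x = n * f x ^ (n - 1) * pd i f x := by
  simp [pd, fderiv_fun_pow n hf]

theorem pd_fun_inv (hg : DifferentiableAt ℝ g x) (hx : g x ≠ 0) :
    pd i (fun w => (g w)⁻¹) x = -pd i g x / g x ^ 2 := by
  have h : HasFDerivAt (fun w => (g w)⁻¹) ((-(g x ^ 2)⁻¹) • fderiv ℝ g x) x :=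
    (hasDerivAt_inv hx).comp_hasFDerivAt x hg.hasFDerivAt
  simp [pd, h.fderiv]
  ring

theorem pd_fun_div (hf : DifferentiableAt ℝ f x) (hg : DifferentiableAt ℝ g x) (hx : g x ≠ 0) :
    pd i (fun w => f w / g w) x = (pd i f x * g x - f x * pd i g x) / g x ^ 2 := by
  simp only [div_eq_mul_inv (f _)]
  rw [pd_fun_mul (g := fun w => (g w)⁻¹) i hf (hg.inv hx), pd_fun_inv i hg hx]
  field_simp
  ring

end PartialDerivative

theorem isOpen_setOf_apply_ne_zero {N : ℕ} (i : Fin N) : IsOpen {w : Fin N → ℝ | w i ≠ 0} :=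
  isOpen_ne_fun (continuous_apply i) continuous_const

noncomputable def gradFF (w : Fin 4 → ℝ) : Fin 4 → ℝ :=
  ![w 0 * w 1 / 4 + w 2 * w 3 / 4,
    w 0 ^ 2 / 8 + w 1 ^ 4 / 768 + w 1 * w 2 * w 3 / 16 + w 3 ^ 4 / 768,
    w 0 * w 3 / 4 + w 1 ^ 2 * w 3 / 32 + w 2 ^ 2 / (2 * w 3),
    w 0 * w 2 / 4 + w 1 ^ 2 * w 2 / 32 + w 1 * w 3 ^ 3 / 192 - w 2 ^ 3 / (6 * w 3 ^ 2)]

noncomputable def hessFF (w : Fin 4 → ℝ) : Fin 4 → Fin 4 → ℝ :=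
  ![![w 1 / 4, w 0 / 4, w 3 / 4, w 2 / 4],
    ![w 0 / 4, w 1 ^ 3 / 192 + w 2 * w 3 / 16, w 1 * w 3 / 16, w 1 * w 2 / 16 + w 3 ^ 3 / 192],
    ![w 3 / 4, w 1 * w 3 / 16, w 2 / w 3, w 0 / 4 + w 1 ^ 2 / 32 - w 2 ^ 2 / (2 * w 3 ^ 2)],
    ![w 2 / 4, w 1 * w 2 / 16 + w 3 ^ 3 / 192, w 0 / 4 + w 1 ^ 2 / 32 - w 2 ^ 2 / (2 * w 3 ^ 2),
      w 1 * w 3 ^ 2 / 64 + w 2 ^ 3 / (3 * w 3 ^ 3)]]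

noncomputable def thirdFF (w : Fin 4 → ℝ) : Fin 4 → Fin 4 → Fin 4 → ℝ :=
  ![![![0, 1/4, 0, 0],
      ![1/4, 0, 0, 0],
      ![0, 0, 0, 1/4],
      ![0, 0, 1/4, 0]],
    ![![1/4, 0, 0, 0],
      ![0, w 1 ^ 2 / 64, w 3 / 16, w 2 / 16],
      ![0, w 3 / 16, 0, w 1 / 16],
      ![0, w 2 / 16, w 1 / 16, w 3 ^ 2 / 64]],
    ![![0, 0, 0, 1/4],
      ![0, w 3 / 16, 0, w 1 / 16],
      ![0, 0, 1 / w 3, -(w 2 / w 3 ^ 2)],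
      ![1/4, w 1 / 16, -(w 2 / w 3 ^ 2), w 2 ^ 2 / w 3 ^ 3]],
    ![![0, 0, 1/4, 0],
      ![0, w 2 / 16, w 1 / 16, w 3 ^ 2 / 64],
      ![1/4, w 1 / 16, -(w 2 / w 3 ^ 2), w 2 ^ 2 / w 3 ^ 3],
      ![0, w 3 ^ 2 / 64, w 2 ^ 2 / w 3 ^ 3, w 1 * w 3 / 32 - w 2 ^ 3 / w 3 ^ 4]]]

section Derivatives

variable {x : Fin 4 → ℝ}

theorem pd_FF (i : Fin 4) (hx : x 3 ≠ 0) : pd i FF x = gradFF x i := by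
  unfold FF
  fin_cases i <;>
  simp (disch := first | fun_prop (disch := simp [hx]) | simp [hx]) only
    [pd_fun_add, pd_fun_mul, pd_fun_div, pd_fun_pow, pd_coord, pd_const] <;>
  simp [gradFF] <;> field_simp <;> ring

theorem pd_gradFF (i j : Fin 4) (hx : x 3 ≠ 0) : pd j (fun w => gradFF w i) x = hessFF x i j := by
  fin_cases i <;> fin_cases j <;>
  simp (disch := first | fun_prop (disch := simp [hx]) | simp [hx]) only
    [Fin.zero_eta, Fin.mk_one, Fin.reduceFinMk, gradFF, Matrix.cons_val,
      pd_fun_add, pd_fun_sub, pd_fun_mul, pd_fun_div, pd_fun_pow, pd_coord, pd_const] <;>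
  simp [hessFF] <;> field_simp <;> ring

theorem pd_hessFF (i j k : Fin 4) (hx : x 3 ≠ 0) :
    pd k (fun w => hessFF w i j) x = thirdFF x i j k := by
  fin_cases i <;> fin_cases j <;> fin_cases k <;>
  simp (disch := first | fun_prop (disch := simp [hx]) | simp [hx]) only
    [Fin.zero_eta, Fin.mk_one, Fin.reduceFinMk, hessFF, Matrix.cons_val,
      pd_fun_add, pd_fun_sub, pd_fun_mul, pd_fun_div, pd_fun_pow, pd_coord, pd_const] <;>
  simp [thirdFF] <;> field_simp <;> ring

end Derivatives

theorem c3_eq_thirdFF {x : Fin 4 → ℝ} (hx : x 3 ≠ 0) (α β γ : Fin 4) :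
    c3 α β γ x = thirdFF x γ β α := by
  have hU := isOpen_setOf_apply_ne_zero (3 : Fin 4)
  have hess : EqOn (pd β (pd γ FF)) (fun w => hessFF w γ β) {w | w 3 ≠ 0} := fun y hy => by
    rw [pd_congr_of_eqOn β hU (fun z hz => pd_FF γ hz) hy]
    exact pd_gradFF γ β hy
  rw [c3, pd_congr_of_eqOn α hU hess hx]
  exact pd_hessFF γ β α hx

theorem eta_mul_smul_eta : eta * ((16 : ℝ) • eta) = 1 := by
  ext i j
  fin_cases i <;> fin_cases j <;> simp [eta, Matrix.mul_apply, Fin.sum_univ_four] <;> norm_num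

theorem inv_eta : eta⁻¹ = (16 : ℝ) • eta :=
  Matrix.inv_eq_right_inv eta_mul_smul_eta

theorem isUnit_det_eta : IsUnit eta.det :=
  Matrix.isUnit_det_of_right_inverse eta_mul_smul_eta

theorem thirdFF_zero (x : Fin 4 → ℝ) (β γ : Fin 4) : thirdFF x γ β 0 = eta β γ := by
  fin_cases β <;> fin_cases γ <;> simp [thirdFF, eta]

noncomputable def structFF (x : Fin 4 → ℝ) (γ α β : Fin 4) : ℝ :=
  ∑ ε, eta⁻¹ γ ε * thirdFF x β α ε

theorem cUp_eq_structFF {x : Fin 4 → ℝ} (hx : x 3 ≠ 0) (γ α β : Fin 4) :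
    cUp γ α β x = structFF x γ α β := by
  simp only [cUp, structFF, c3_eq_thirdFF hx]

theorem structFF_eq (x : Fin 4 → ℝ) (γ α β : Fin 4) :
    structFF x γ α β = 4 * thirdFF x β α (![1, 0, 3, 2] γ) := by
  simp only [structFF, inv_eta, Fin.sum_univ_four]
  fin_cases γ <;> simp [eta, Matrix.cons_val_two, Matrix.cons_val_three] <;> norm_num

theorem structFF_assoc {x : Fin 4 → ℝ} (hx : x 3 ≠ 0) (α β γ σ : Fin 4) :
    ∑ ε, structFF x ε α β * structFF x σ ε γ = ∑ ε, structFF x ε α γ * structFF x σ ε β := by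
  simp only [structFF_eq, Fin.sum_univ_four]
  fin_cases α <;> fin_cases β <;> fin_cases γ <;> fin_cases σ <;>
  simp only [Fin.zero_eta, Fin.mk_one, Fin.reduceFinMk, thirdFF, Matrix.cons_val] <;>
  field_simp <;> ring

theorem stmt_4 :
    (∀ (α β : Fin 4) (x : Fin 4 → ℝ), (_ : x 3 ≠ 0) → c3 0 α β x = eta α β) ∧
    IsUnit eta.det ∧
    (∀ (α β γ σ : Fin 4) (x : Fin 4 → ℝ), (_ : x 3 ≠ 0) → 
      ∑ ε, cUp ε α β x * cUp σ ε γ x = ∑ ε, cUp ε α γ x * cUp σ ε β x) := by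
  refine ⟨fun α β x hx => ?_, isUnit_det_eta, fun α β γ σ x hx => ?_⟩
  · rw [c3_eq_thirdFF hx, thirdFF_zero]
  · simp only [cUp_eq_structFF hx]
    exact structFF_assoc hx α β γ σ
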